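/- Consider S servers, where server s has m_s client paths, and let m = Σ_{s=1}^{S} m_s be the total number of paths, defined on a finite set V of n nodes, with path p of length d_p (number of nodes). Suppose the whole collection P of m paths is consistent and, for each s, the m_s paths of server s all have the same final node r_s. Set N_max = min{ Σ_{p ∈ P} d_p, Σ_{s=1}^{S} [ (m_s² + 3m_s − 2)/2 + 2·m_s·(m − m_s) ] } and i_max = max{k ∈ ℕ : Σ_{i=1}^{k} i·C(m,i) ≤ N_max}. Then the number of identifiable nodes is at most min{Σ_{i=1}^{i_max} C(m,i) + ⌊(N_max − Σ_{i=1}^{i_max} i·C(m,i))/(i_max + 1)⌋, n}. -/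

import Mathlib

/-- The contiguous segment of the list `l` between (the first occurrences of) the
nodes `u` and `w`, inclusive, taken in the order of `l`. -/
def seg {V : Type*} [DecidableEq V] (l : List V) (u w : V) : List V :=
  (l.drop (min (l.idxOf u) (l.idxOf w))).take
    (max (l.idxOf u) (l.idxOf w) - min (l.idxOf u) (l.idxOf w) + 1)

/-- Two paths are consistent if, for any two nodes `u, w` appearing on both, the
contiguous segment of one between `u` and `w` equals, up to reversal, the
contiguous segment of the other between `u` and `w`. -/
def ConsistentPair {V : Type*} [DecidableEq V] (l l' : List V) : Prop :=
  ∀ u w : V, u ∈ l → w ∈ l → u ∈ l' → w ∈ l' →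
    seg l u w = seg l' u w ∨ seg l u w = (seg l' u w).reverse

/-- A family of paths is consistent if every two of its paths are consistent. -/
def Consistent {V : Type*} [DecidableEq V] {ι : Type*} (p : ι → List V) : Prop :=
  ∀ i j, ConsistentPair (p i) (p j)

/-- The encoding of a node `v` w.r.t. an indexed family of monitoring paths `p`:
the set of indices of paths on which `v` appears. -/
def encoding {V : Type*} [DecidableEq V] {ι : Type*} [Fintype ι] [DecidableEq ι]
    (p : ι → List V) (v : V) : Finset ι :=
  Finset.univ.filter fun i => v ∈ p i

/-- A node is identifiable iff its encoding is nonempty and distinct from the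
encoding of every other node. -/
def Identifiable {V : Type*} [DecidableEq V] {ι : Type*} [Fintype ι] [DecidableEq ι]
    (p : ι → List V) (v : V) : Prop :=
  encoding p v ≠ ∅ ∧ ∀ w : V, w ≠ v → encoding p w ≠ encoding p v

/-- `i_max = max {k : Σ_{i=1}^k i·C(m,i) ≤ N}` (the partial sums are constant beyond
`k = m` since `C(m,i) = 0` for `i > m`, so the maximum is realized within `{0,…,m}`). -/
def imax (m N : ℕ) : ℕ :=
  Nat.findGreatest (fun k => ∑ i ∈ Finset.Icc 1 k, i * m.choose i ≤ N) m

/-- `Σ_{i=1}^{i_max} C(m,i) + ⌊(N − Σ_{i=1}^{i_max} i·C(m,i)) / (i_max + 1)⌋`. -/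
def boundFormula (m N : ℕ) : ℕ :=
  (∑ i ∈ Finset.Icc 1 (imax m N), m.choose i) +
    (N - ∑ i ∈ Finset.Icc 1 (imax m N), i * m.choose i) / (imax m N + 1)


/-!
Identifiable nodes have distinct nonempty encodings, so their encodings form a family of
distinct nonempty subsets of the `m` paths, of total size `Σ_p #(identifiable nodes on p)`.
Such a family `F` with total size at most `N` has at most `C(m, i)` members of each size
`i ≤ K` and all other members have size at least `K + 1`, so
`(K + 1) #F ≤ N + Σ_{i ≤ K} (K + 1 - i) C(m, i)` for every `K`; this gives `boundFormula m N`.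

It remains to bound the total size by `N_max`; the bound `Σ_p d_p` is immediate. Walk along a
path of a server whose path set is `T`. A path has at most one more distinct encoding than
positions where the encoding changes. Since all paths of `T` end at the same node, consistency
makes the encoding restricted to `T` grow monotonically along the walk, and every other path
meets the walk in a contiguous block, so membership in it changes at most twice. Hence the path
carries at most `#(restricted encodings on it) + 2 (m - m_s)` encodings. The restricted
encodings of the server form a laminar family of nonempty subsets of `T`, whose total size is
at most `(m_s² + 3 m_s - 2) / 2`, and summing over the paths of `T` counts each restricted
encoding `E` exactly `#E` times.
-/
open Finset

section

variable {α β γ ι : Type*}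

section ChangeCount

variable [DecidableEq β]

def changeCount (f : α → β) : List α → ℕ
  | a :: b :: l => (if f a = f b then 0 else 1) + changeCount f (b :: l)
  | _ => 0

lemma card_toFinset_map_le_changeCount_add_one (f : α → β) :
    ∀ l : List α, #(l.map f).toFinset ≤ changeCount f l + 1
  | [] | [_] => by simp
  | a :: b :: l => by
    have ih := card_toFinset_map_le_changeCount_add_one f (b :: l)
    rw [changeCount, List.map_cons, List.toFinset_cons]
    split_ifs with h
    · rw [insert_eq_of_mem (by simp [h])]
      omega
    · have := card_insert_le (f a) ((b :: l).map f).toFinset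
      omega

lemma changeCount_add_one_le_card_toFinset_map [PartialOrder β] {f : α → β} :
    ∀ {l : List α}, l ≠ [] → l.Pairwise (fun a b => f a ≤ f b) →
      changeCount f l + 1 ≤ #(l.map f).toFinset
  | [_], _, _ => by simp [changeCount]
  | a :: b :: l, _, hmono => by
    obtain ⟨ha, hbl⟩ := List.pairwise_cons.mp hmono
    have hb := (List.pairwise_cons.mp hbl).1
    have ih := changeCount_add_one_le_card_toFinset_map (List.cons_ne_nil b l) hbl
    rw [changeCount, List.map_cons, List.toFinset_cons]
    split_ifs with h
    · rw [insert_eq_of_mem (by simp [h])]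
      omega
    · have hfa : f a ∉ ((b :: l).map f).toFinset := by
        simp only [List.mem_toFinset, List.mem_map, List.mem_cons, not_exists, not_and]
        rintro x (rfl | hx) hfx
        · exact h hfx.symm
        · exact h (le_antisymm (ha b (by simp)) (hfx ▸ hb x hx))
      rw [card_insert_of_notMem hfa]
      omega

lemma changeCount_eq_zero_of_forall_eq {f : α → β} {c : β} :
    ∀ {l : List α}, (∀ a ∈ l, f a = c) → changeCount f l = 0
  | [], _ | [_], _ => rfl
  | a :: b :: l, h => by
    rw [changeCount, changeCount_eq_zero_of_forall_eq (fun x hx => h x (by simp_all)),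
      if_pos ((h a (by simp)).trans (h b (by simp)).symm)]

lemma changeCount_le_add_sum {δ : Type*} [DecidableEq γ] [DecidableEq δ]
    {f : α → β} (g : α → γ) (k : ι → α → δ) (T : Finset ι)
    (h : ∀ a b, f a ≠ f b → g a ≠ g b ∨ ∃ i ∈ T, k i a ≠ k i b) :
    ∀ l : List α, changeCount f l ≤ changeCount g l + ∑ i ∈ T, changeCount (k i) l
  | [] | [_] => by simp [changeCount]
  | a :: b :: l => by
    have ih := changeCount_le_add_sum g k T h (b :: l)
    simp only [changeCount, sum_add_distrib]
    have hstep : (if f a = f b then 0 else 1) ≤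
        (if g a = g b then 0 else 1) + ∑ i ∈ T, if k i a = k i b then 0 else 1 := by
      by_cases hf : f a = f b
      · simp [hf]
      obtain hg | ⟨i, hi, hk⟩ := h a b hf
      · simp [hf, hg]
      · calc (if f a = f b then 0 else 1) = if k i a = k i b then 0 else 1 := by simp [hf, hk]
          _ ≤ ∑ i ∈ T, if k i a = k i b then 0 else 1 :=
            single_le_sum (f := fun i => if k i a = k i b then 0 else 1)
              (fun _ _ => Nat.zero_le _) hi
          _ ≤ _ := Nat.le_add_left _ _
    omega

end ChangeCount

section Contiguous

def IsContiguousIn (P : α → Prop) (l : List α) : Prop :=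
  ∀ ⦃a x b⦄, [a, x, b].Sublist l → P a → P b → P x

variable {P : α → Prop}

lemma IsContiguousIn.of_cons {a : α} {l : List α} (h : IsContiguousIn P (a :: l)) :
    IsContiguousIn P l :=
  fun _ _ _ hs => h (hs.cons a)

lemma IsContiguousIn.changeCount_le_one_of_head [DecidablePred P] {a : α} :
    ∀ {l : List α}, IsContiguousIn P (a :: l) → P a →
      changeCount (fun x => decide (P x)) (a :: l) ≤ 1
  | [], _, _ => by simp [changeCount]
  | b :: l, hP, ha => by
    by_cases hb : P b
    · have := hP.of_cons.changeCount_le_one_of_head hb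
      simp_all [changeCount]
    · have hl : ∀ x ∈ b :: l, decide (P x) = false := by
        intro x hx
        rcases List.mem_cons.mp hx with rfl | hx
        · simpa using hb
        · have hsub := ((List.singleton_sublist.mpr hx).cons_cons b).cons_cons a
          simpa using fun hPx => hb (hP hsub ha hPx)
      simp [changeCount, changeCount_eq_zero_of_forall_eq hl, ha, hb]

lemma IsContiguousIn.changeCount_le_two [DecidablePred P] :
    ∀ {l : List α}, IsContiguousIn P l → changeCount (fun x => decide (P x)) l ≤ 2
  | [], _ | [_], _ => by simp [changeCount]
  | a :: b :: l, hP => by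
    by_cases ha : P a
    · exact (hP.changeCount_le_one_of_head ha).trans (by norm_num)
    by_cases hb : P b
    · have := hP.of_cons.changeCount_le_one_of_head hb
      simp only [changeCount, ha, hb, decide_false, decide_true, Bool.false_eq_true,
        if_false] at this ⊢
      omega
    · have := hP.of_cons.changeCount_le_two
      simp_all [changeCount]

end Contiguous

lemma card_toFinset_map_le_card_toFinset_map_inter_add [Fintype ι] [DecidableEq ι]
    (f : α → Finset ι) (S : Finset ι) {l : List α}
    (hmono : l.Pairwise (fun a b => f a ∩ S ⊆ f b ∩ S))
    (hcontig : ∀ i ∉ S, IsContiguousIn (fun a => i ∈ f a) l) :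
    #(l.map f).toFinset ≤ #(l.map (f · ∩ S)).toFinset + 2 * #Sᶜ := by
  rcases eq_or_ne l [] with rfl | hl
  · simp
  have hsplit : ∀ a b, f a ≠ f b →
      f a ∩ S ≠ f b ∩ S ∨ ∃ i ∈ Sᶜ, decide (i ∈ f a) ≠ decide (i ∈ f b) := by
    intro a b hab
    by_contra! h
    refine hab (ext fun i => ?_)
    by_cases hi : i ∈ S
    · simpa [hi] using congrArg (i ∈ ·) h.1
    · simpa using h.2 i (mem_compl.mpr hi)
  have hcompl : ∑ i ∈ Sᶜ, changeCount (fun a => decide (i ∈ f a)) l ≤ 2 * #Sᶜ := by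
    rw [mul_comm, ← smul_eq_mul, ← sum_const]
    exact sum_le_sum fun i hi => (hcontig i (mem_compl.mp hi)).changeCount_le_two
  calc #(l.map f).toFinset
      ≤ changeCount f l + 1 := card_toFinset_map_le_changeCount_add_one f l
    _ ≤ changeCount (f · ∩ S) l +
          ∑ i ∈ Sᶜ, changeCount (fun a => decide (i ∈ f a)) l + 1 :=
        Nat.add_le_add_right (changeCount_le_add_sum _ _ _ hsplit l) 1
    _ ≤ #(l.map (f · ∩ S)).toFinset + 2 * #Sᶜ := by
        have := changeCount_add_one_le_card_toFinset_map hl hmono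
        omega

section Consistency

variable {V : Type*} [DecidableEq V] {l l' : List V} {u v w x r : V}

lemma List.Nodup.idxOf_lt_idxOf_of_sublist :
    ∀ {l : List V}, l.Nodup → [u, w].Sublist l → l.idxOf u < l.idxOf w
  | [], _, h => absurd h (by simp)
  | c :: l, hl, h => by
    obtain ⟨hc, hl⟩ := List.nodup_cons.mp hl
    rcases List.sublist_cons_iff.mp h with h | ⟨_, h', hw⟩
    · have hu : u ≠ c := ne_of_mem_of_not_mem (h.subset (by simp)) hc
      have hw : w ≠ c := ne_of_mem_of_not_mem (h.subset (by simp)) hc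
      rw [List.idxOf_cons_ne l hu.symm, List.idxOf_cons_ne l hw.symm]
      exact Nat.succ_lt_succ (hl.idxOf_lt_idxOf_of_sublist h)
    · obtain ⟨rfl, rfl⟩ := List.cons_eq_cons.mp h'
      have hw : w ∈ l := List.singleton_sublist.mp hw
      rw [List.idxOf_cons_self, List.idxOf_cons_ne l (ne_of_mem_of_not_mem hw hc).symm]
      exact Nat.succ_pos _

lemma mem_of_mem_seg (h : x ∈ seg l u w) : x ∈ l :=
  List.mem_of_mem_drop (List.mem_of_mem_take h)

lemma mem_seg_of_idxOf_le (hx : x ∈ l) (hux : l.idxOf u ≤ l.idxOf x)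
    (hxw : l.idxOf x ≤ l.idxOf w) : x ∈ seg l u w := by
  have hxl : l.idxOf x < l.length := List.idxOf_lt_length_iff.mpr hx
  rw [seg, min_eq_left (hux.trans hxw), max_eq_right (hux.trans hxw)]
  refine List.mem_iff_getElem.mpr ⟨l.idxOf x - l.idxOf u, by simp; omega, ?_⟩
  rw [List.getElem_take, List.getElem_drop]
  simp only [Nat.add_sub_cancel' hux]
  exact List.getElem_idxOf hxl

lemma ConsistentPair.mem_of_idxOf_le (hc : ConsistentPair l l') (hw : w ∈ l) (hu' : u ∈ l')
    (hw' : w ∈ l') (hx : x ∈ l) (hux : l.idxOf u ≤ l.idxOf x)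
    (hxw : l.idxOf x ≤ l.idxOf w) : x ∈ l' := by
  have hu : u ∈ l := List.idxOf_lt_length_iff.mp (hux.trans_lt (List.idxOf_lt_length_iff.mpr hx))
  have hseg := mem_seg_of_idxOf_le hx hux hxw
  rcases hc u w hu hw hu' hw' with h | h
  · exact mem_of_mem_seg (h ▸ hseg)
  · exact mem_of_mem_seg (List.mem_reverse.mp (h ▸ hseg))

lemma ConsistentPair.isContiguousIn (hc : ConsistentPair l l') (hl : l.Nodup) :
    IsContiguousIn (· ∈ l') l := by
  intro u x w h hu' hw'
  have hux := hl.idxOf_lt_idxOf_of_sublist ((show [u, x].Sublist [u, x, w] by simp).trans h)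
  have hxw := hl.idxOf_lt_idxOf_of_sublist ((show [x, w].Sublist [u, x, w] by simp).trans h)
  exact hc.mem_of_idxOf_le (h.subset (by simp)) hu' hw' (h.subset (by simp)) hux.le hxw.le

lemma ConsistentPair.mem_of_sublist_of_getLast? (hc : ConsistentPair l l') (hl : l.Nodup)
    (hr : l.getLast? = some r) (hr' : l'.getLast? = some r) (hvw : [v, w].Sublist l)
    (hv : v ∈ l') : w ∈ l' := by
  have hne : l ≠ [] := by rintro rfl; simp at hr
  have hlast : l.getLast hne = r :=
    Option.some_inj.mp ((List.getLast?_eq_some_getLast hne).symm.trans hr)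
  have hw : w ∈ l := hvw.subset (by simp)
  have hwr : l.idxOf w ≤ l.idxOf r := by
    rw [← hlast, List.getLast_eq_getElem, hl.idxOf_getElem]
    have := List.idxOf_lt_length_iff.mpr hw
    omega
  exact hc.mem_of_idxOf_le (hlast ▸ List.getLast_mem hne) hv (List.mem_of_getLast? hr') hw
    (hl.idxOf_lt_idxOf_of_sublist hvw).le hwr

end Consistency

section Laminar

lemma le_sq_add_three_mul_sub_two_div_two (k : ℕ) : k ≤ (k ^ 2 + 3 * k - 2) / 2 := by
  rcases k with _ | k
  · rfl
  · have : (k + 1) ^ 2 = k ^ 2 + 2 * k + 1 := by ring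
    omega

lemma add_add_sq_bound_le_sq_bound {a b : ℕ} (ha : 1 ≤ a) (hb : 1 ≤ b) :
    (a + b) + (a ^ 2 + 3 * a - 2) / 2 + (b ^ 2 + 3 * b - 2) / 2 ≤
      ((a + b) ^ 2 + 3 * (a + b) - 2) / 2 := by
  obtain ⟨a, rfl⟩ := Nat.exists_eq_add_of_le ha
  obtain ⟨b, rfl⟩ := Nat.exists_eq_add_of_le hb
  have e1 : (1 + a) ^ 2 = a ^ 2 + 2 * a + 1 := by ring
  have e2 : (1 + b) ^ 2 = b ^ 2 + 2 * b + 1 := by ring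
  have e3 : (1 + a + (1 + b)) ^ 2 = a ^ 2 + b ^ 2 + 2 * (a * b) + 4 * a + 4 * b + 4 := by ring
  omega

def Laminar (F : Finset (Finset ι)) : Prop :=
  ∀ E ∈ F, ∀ E' ∈ F, E ⊆ E' ∨ E' ⊆ E ∨ Disjoint E E'

lemma Laminar.subset {F G : Finset (Finset ι)} (hF : Laminar F) (hG : G ⊆ F) : Laminar G :=
  fun E hE E' hE' => hF E (hG hE) E' (hG hE')

theorem Laminar.sum_card_le [DecidableEq ι] {F : Finset (Finset ι)} {U : Finset ι}
    (hF : Laminar F) (hU : ∀ E ∈ F, E ⊆ U) (hne : ∀ E ∈ F, E.Nonempty) :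
    ∑ E ∈ F, #E ≤ (#U ^ 2 + 3 * #U - 2) / 2 := by
  induction hk : #U using Nat.strong_induction_on generalizing U F with
  | _ k ih =>
  subst hk
  have hsumU : ∑ E ∈ F, #E ≤ #U + ∑ E ∈ F.erase U, #E := by
    by_cases hUF : U ∈ F
    · rw [add_sum_erase F _ hUF]
    · rw [erase_eq_of_notMem hUF]; exact Nat.le_add_left _ _
  rcases (F.erase U).eq_empty_or_nonempty with hF' | hF'
  · rw [hF', sum_empty] at hsumU
    exact hsumU.trans (le_sq_add_three_mul_sub_two_div_two _)
  -- Every member of `F.erase U` lies inside a largest one, `M`, or is disjoint from it.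
  obtain ⟨M, hMF', hMmax⟩ := exists_max_image (F.erase U) card hF'
  obtain ⟨hMU, hMF⟩ := mem_erase.mp hMF'
  have hMsub : M ⊂ U := ssubset_of_subset_of_ne (hU M hMF) hMU
  have hMne : M.Nonempty := hne M hMF
  have hlam' : Laminar (F.erase U) := hF.subset (erase_subset U F)
  have hin : ∑ E ∈ (F.erase U).filter (· ⊆ M), #E ≤ (#M ^ 2 + 3 * #M - 2) / 2 :=
    ih _ (card_lt_card hMsub) (hlam'.subset (filter_subset _ _))
      (fun E hE => (mem_filter.mp hE).2)
      (fun E hE => hne E (mem_of_mem_erase (mem_filter.mp hE).1)) rfl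
  have hout_sub : ∀ E ∈ (F.erase U).filter (¬ · ⊆ M), E ⊆ U \ M := by
    intro E hE
    obtain ⟨hEF', hEM⟩ := mem_filter.mp hE
    rcases hlam' E hEF' M hMF' with h | h | h
    · exact absurd h hEM
    · exact absurd (eq_of_subset_of_card_le h (hMmax E hEF')).symm.subset hEM
    · exact subset_sdiff.mpr ⟨hU E (mem_of_mem_erase hEF'), h⟩
  have hout : ∑ E ∈ (F.erase U).filter (¬ · ⊆ M), #E ≤
      (#(U \ M) ^ 2 + 3 * #(U \ M) - 2) / 2 :=
    ih _ (card_lt_card (sdiff_ssubset hMsub.subset hMne)) (hlam'.subset (filter_subset _ _))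
      hout_sub (fun E hE => hne E (mem_of_mem_erase (mem_filter.mp hE).1)) rfl
  have hcard : #M + #(U \ M) = #U := by rw [add_comm, card_sdiff_add_card_eq_card hMsub.subset]
  have hbound := add_add_sq_bound_le_sq_bound (card_pos.mpr hMne)
    (card_pos.mpr (sdiff_nonempty.mpr hMsub.not_subset))
  rw [hcard] at hbound
  have hsplit := sum_filter_add_sum_filter_not (F.erase U) (· ⊆ M) card
  omega

end Laminar

section Counting

variable [Fintype ι] {F : Finset (Finset ι)}

lemma sum_tsub_card_le_sum_choose (hne : ∀ E ∈ F, E.Nonempty) (K : ℕ) :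
    ∑ E ∈ F, (K + 1 - #E) ≤ ∑ i ∈ Icc 1 K, (Fintype.card ι).choose i * (K + 1 - i) := by
  classical
  set m := Fintype.card ι
  have hmaps : ∀ E ∈ F, #E ∈ Icc 1 m :=
    fun E hE => mem_Icc.mpr ⟨card_pos.mpr (hne E hE), card_le_univ E⟩
  have hfiber : ∀ i, #{E ∈ F | #E = i} ≤ m.choose i := fun i =>
    (card_le_card fun E hE => mem_powersetCard_univ.mpr (mem_filter.mp hE).2).trans_eq
      (by rw [card_powersetCard, card_univ])
  calc ∑ E ∈ F, (K + 1 - #E)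
      = ∑ i ∈ Icc 1 m, ∑ E ∈ F with #E = i, (K + 1 - #E) :=
        (sum_fiberwise_of_maps_to hmaps _).symm
    _ ≤ ∑ i ∈ Icc 1 m, m.choose i * (K + 1 - i) := sum_le_sum fun i _ => by
        rw [sum_congr rfl fun E hE => by rw [(mem_filter.mp hE).2], sum_const, smul_eq_mul]
        exact Nat.mul_le_mul_right _ (hfiber i)
    _ ≤ ∑ i ∈ Icc 1 K, m.choose i * (K + 1 - i) := sum_le_sum_of_ne_zero fun i hi h =>
        mem_Icc.mpr ⟨(mem_Icc.mp hi).1, by by_contra! hK; simp [Nat.sub_eq_zero_of_le hK] at h⟩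

lemma le_add_tsub_div_of_mul_add_le {a c n t k : ℕ} (h : (k + 1) * a + t ≤ n + (k + 1) * c) :
    a ≤ c + (n - t) / (k + 1) := by
  have : (a - c) * (k + 1) ≤ n - t := by rw [Nat.sub_mul, mul_comm a, mul_comm c]; omega
  have := (Nat.le_div_iff_mul_le (by omega : 0 < k + 1)).mpr this
  omega

theorem card_le_sum_choose_add_div (hne : ∀ E ∈ F, E.Nonempty) {N : ℕ}
    (hsum : ∑ E ∈ F, #E ≤ N) (K : ℕ) :
    #F ≤ ∑ i ∈ Icc 1 K, (Fintype.card ι).choose i +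
      (N - ∑ i ∈ Icc 1 K, i * (Fintype.card ι).choose i) / (K + 1) := by
  set m := Fintype.card ι
  refine le_add_tsub_div_of_mul_add_le ?_
  have hrow : ∑ i ∈ Icc 1 K, m.choose i * (K + 1 - i) + ∑ i ∈ Icc 1 K, i * m.choose i =
      (K + 1) * ∑ i ∈ Icc 1 K, m.choose i := by
    rw [mul_sum, ← sum_add_distrib]
    refine sum_congr rfl fun i hi => ?_
    rw [mul_comm (m.choose i), ← add_mul, Nat.sub_add_cancel (by grind)]
  have hkey : (K + 1) * #F ≤ N + ∑ i ∈ Icc 1 K, m.choose i * (K + 1 - i) :=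
    calc (K + 1) * #F = ∑ _E ∈ F, (K + 1) := by rw [sum_const, smul_eq_mul, mul_comm]
      _ ≤ ∑ E ∈ F, (#E + (K + 1 - #E)) := sum_le_sum fun E _ => by omega
      _ ≤ _ := by
          rw [sum_add_distrib]
          exact add_le_add hsum (sum_tsub_card_le_sum_choose hne K)
  omega

end Counting

section Encoding

variable {V : Type*} [DecidableEq V] [Fintype ι] [DecidableEq ι] {p : ι → List V}
  {S : Finset ι} {r : V}

lemma mem_encoding {v : V} {i : ι} : i ∈ encoding p v ↔ v ∈ p i := by
  simp [encoding]

lemma injOn_encoding_identifiable : Set.InjOn (encoding p) {v | Identifiable p v} :=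
  fun _ _ _ hw h => by_contra fun hvw => hw.2 _ hvw h

lemma sum_card_encoding (I : Finset V) :
    ∑ v ∈ I, #(encoding p v) = ∑ i, #{v ∈ I | v ∈ p i} :=
  sum_card_bipartiteAbove_eq_sum_card_bipartiteBelow (r := fun v i => v ∈ p i)

lemma pairwise_encoding_inter_subset (hnodup : ∀ i, (p i).Nodup) (hcons : Consistent p)
    (hS : ∀ i ∈ S, (p i).getLast? = some r) {j : ι} (hj : j ∈ S) :
    (p j).Pairwise (fun v w => encoding p v ∩ S ⊆ encoding p w ∩ S) := by
  refine List.pairwise_iff_forall_sublist.mpr fun hvw i => ?_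
  simp only [mem_inter, mem_encoding]
  exact fun ⟨hv, hi⟩ =>
    ⟨(hcons j i).mem_of_sublist_of_getLast? (hnodup j) (hS j hj) (hS i hi) hvw hv, hi⟩

lemma card_toFinset_map_encoding_le (hnodup : ∀ i, (p i).Nodup) (hcons : Consistent p)
    (hS : ∀ i ∈ S, (p i).getLast? = some r) {j : ι} (hj : j ∈ S) :
    #((p j).map (encoding p)).toFinset ≤
      #((p j).map (encoding p · ∩ S)).toFinset + 2 * #Sᶜ :=
  card_toFinset_map_le_card_toFinset_map_inter_add _ _
    (pairwise_encoding_inter_subset hnodup hcons hS hj) fun i _ => by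
      simpa only [mem_encoding] using (hcons j i).isContiguousIn (hnodup j)

theorem Consistent.laminar_encoding_inter (hnodup : ∀ i, (p i).Nodup) (hcons : Consistent p)
    (hS : ∀ i ∈ S, (p i).getLast? = some r) :
    Laminar (S.biUnion fun j => ((p j).map (encoding p · ∩ S)).toFinset) := by
  simp only [Laminar, mem_biUnion, List.mem_toFinset, List.mem_map]
  rintro _ ⟨-, -, v, -, rfl⟩ _ ⟨-, -, w, -, rfl⟩
  obtain hdisj | ⟨i, hi⟩ := disjoint_or_nonempty_inter (encoding p v ∩ S) (encoding p w ∩ S)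
  · exact Or.inr (Or.inr hdisj)
  simp only [mem_inter, mem_encoding] at hi
  have hmono := pairwise_encoding_inter_subset hnodup hcons hS hi.1.2
  exact (List.Pairwise.forall_of_forall_of_flip (R := fun v w =>
      encoding p v ∩ S ⊆ encoding p w ∩ S ∨ encoding p w ∩ S ⊆ encoding p v ∩ S)
    (fun _ _ => Or.inl subset_rfl)
    (hmono.imp Or.inl) (hmono.imp Or.inr) hi.1.1 hi.2.1).imp_right Or.inl

theorem sum_card_toFinset_map_encoding_le (hnodup : ∀ i, (p i).Nodup) (hcons : Consistent p)
    (hS : ∀ i ∈ S, (p i).getLast? = some r) :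
    ∑ j ∈ S, #((p j).map (encoding p)).toFinset ≤
      (#S ^ 2 + 3 * #S - 2) / 2 + 2 * #S * #Sᶜ := by
  set F := S.biUnion fun j => ((p j).map (encoding p · ∩ S)).toFinset
  have hFS : ∀ E ∈ F, E ⊆ S := by
    simp only [F, mem_biUnion, List.mem_toFinset, List.mem_map]
    rintro _ ⟨-, -, v, -, rfl⟩
    exact inter_subset_right
  have hFne : ∀ E ∈ F, E.Nonempty := by
    simp only [F, mem_biUnion, List.mem_toFinset, List.mem_map]
    rintro _ ⟨j, hj, v, hv, rfl⟩
    exact ⟨j, mem_inter.mpr ⟨mem_encoding.mpr hv, hj⟩⟩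
  have hpath : ∀ j ∈ S, ((p j).map (encoding p · ∩ S)).toFinset = {E ∈ F | j ∈ E} := by
    intro j hj
    ext E
    simp only [F, mem_filter, mem_biUnion, List.mem_toFinset, List.mem_map]
    constructor
    · rintro ⟨v, hv, rfl⟩
      exact ⟨⟨j, hj, v, hv, rfl⟩, mem_inter.mpr ⟨mem_encoding.mpr hv, hj⟩⟩
    · rintro ⟨⟨-, -, v, -, rfl⟩, hjv⟩
      exact ⟨v, mem_encoding.mp (mem_inter.mp hjv).1, rfl⟩
  have hdouble : ∑ j ∈ S, #((p j).map (encoding p · ∩ S)).toFinset = ∑ E ∈ F, #E := by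
    rw [sum_congr rfl fun j hj => by rw [hpath j hj]]
    refine (sum_card_bipartiteAbove_eq_sum_card_bipartiteBelow (r := fun j E => j ∈ E)).trans ?_
    refine sum_congr rfl fun E hE => ?_
    rw [bipartiteBelow, filter_mem_eq_inter, inter_eq_right.mpr (hFS E hE)]
  calc ∑ j ∈ S, #((p j).map (encoding p)).toFinset
      ≤ ∑ j ∈ S, (#((p j).map (encoding p · ∩ S)).toFinset + 2 * #Sᶜ) :=
        sum_le_sum fun j hj => card_toFinset_map_encoding_le hnodup hcons hS hj
    _ = ∑ E ∈ F, #E + 2 * #S * #Sᶜ := by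
        rw [sum_add_distrib, hdouble, sum_const, smul_eq_mul, mul_left_comm, mul_assoc]
    _ ≤ (#S ^ 2 + 3 * #S - 2) / 2 + 2 * #S * #Sᶜ :=
        Nat.add_le_add_right ((hcons.laminar_encoding_inter hnodup hS).sum_card_le hFS hFne) _

end Encoding

lemma card_filter_mem_le_card_toFinset_map {V : Type*} [DecidableEq V] [DecidableEq β]
    {f : V → β} {I : Finset V} (hf : Set.InjOn f I) (l : List V) :
    #{v ∈ I | v ∈ l} ≤ #(l.map f).toFinset :=
  card_le_card_of_injOn f (fun v hv => by simpa using ⟨v, (mem_filter.mp hv).2, rfl⟩)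
    (hf.mono (coe_subset.mpr (filter_subset _ _)))

lemma sum_card_toFinset_map_encoding_le_of_server {V : Type*} [DecidableEq V] {S : ℕ}
    {ms : Fin S → ℕ} {p : (s : Fin S) × Fin (ms s) → List V} {r : Fin S → V}
    (hnodup : ∀ idx, (p idx).Nodup) (hcons : Consistent p)
    (hlast : ∀ idx : (s : Fin S) × Fin (ms s), (p idx).getLast? = some (r idx.1)) (s : Fin S) :
    ∑ j, #((p ⟨s, j⟩).map (encoding p)).toFinset ≤
      (ms s ^ 2 + 3 * ms s - 2) / 2 + 2 * ms s * (∑ t, ms t - ms s) := by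
  set T := univ.map (Function.Embedding.sigmaMk (β := fun s => Fin (ms s)) s)
  have hT : #T = ms s := by simp [T]
  have hTc : #Tᶜ = ∑ t, ms t - ms s := by simp [card_compl, hT]
  have hTr : ∀ i ∈ T, (p i).getLast? = some (r s) := by
    simpa [T] using fun j => hlast ⟨s, j⟩
  have := sum_card_toFinset_map_encoding_le hnodup hcons hTr
  rwa [hT, hTc, sum_map] at this

end

/-- Multi-server identifiability with fixed client assignment (Theorem V.10):
with `S` servers, server `s` having `ms s` consistent client paths ending at a
common node `r s`, `m = Σ_s ms s` paths in total on `n` nodes, and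
`N_max = min {Σ_p d_p, Σ_s [(ms s² + 3·ms s − 2)/2 + 2·ms s·(m − ms s)]}`, the
number of identifiable nodes is at most `min (boundFormula m N_max) n`. -/
theorem identifiable_le_multi_server {V : Type*} [Fintype V] [DecidableEq V]
    {S : ℕ} (ms : Fin S → ℕ) (m : ℕ) (hm : m = ∑ s, ms s)
    (p : (s : Fin S) × Fin (ms s) → List V) (r : Fin S → V)
    (hnodup : ∀ idx, (p idx).Nodup) (hcons : Consistent p)
    (hlast : ∀ idx : (s : Fin S) × Fin (ms s), (p idx).getLast? = some (r idx.1)) :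
    {v : V | Identifiable p v}.ncard ≤
      min (boundFormula m
          (min (∑ idx : (s : Fin S) × Fin (ms s), (p idx).length)
            (∑ s : Fin S, (((ms s) ^ 2 + 3 * ms s - 2) / 2 + 2 * ms s * (m - ms s)))))
        (Fintype.card V) := by
  classical
  subst hm
  set I : Finset V := {v | Identifiable p v}
  have hinj : Set.InjOn (encoding p) I := injOn_encoding_identifiable.mono (by simp [I])
  have hpath i : #{v ∈ I | v ∈ p i} ≤ #((p i).map (encoding p)).toFinset :=
    card_filter_mem_le_card_toFinset_map hinj (p i)
  have hlen : ∑ i, #{v ∈ I | v ∈ p i} ≤ ∑ i, (p i).length := sum_le_sum fun i _ =>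
    (hpath i).trans ((List.toFinset_card_le _).trans_eq (List.length_map _))
  have hserver : ∑ i, #{v ∈ I | v ∈ p i} ≤
      ∑ s, ((ms s ^ 2 + 3 * ms s - 2) / 2 + 2 * ms s * (∑ t, ms t - ms s)) := by
    rw [Fintype.sum_sigma]
    exact sum_le_sum fun s _ => (sum_le_sum fun j _ => hpath ⟨s, j⟩).trans
      (sum_card_toFinset_map_encoding_le_of_server hnodup hcons hlast s)
  have key := card_le_sum_choose_add_div (F := I.image (encoding p))
    (by simpa [nonempty_iff_ne_empty, I] using fun v hv => hv.1)
    ((sum_image hinj).trans_le ((sum_card_encoding I).trans_le (le_min hlen hserver)))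
  rw [show {v | Identifiable p v}.ncard = #I by simp [I, Set.ncard_eq_toFinset_card'],
    ← card_image_of_injOn hinj]
  refine le_min ?_ (card_image_le.trans (card_le_univ I))
  -- `boundFormula m N` unfolds to the instance `K = imax m N` of `key`.
  simpa [boundFormula] using key _
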